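/- arXiv:2509.13240 — 3 statements merged into one kernel-verified Lean document; each statement's English description precedes it below -/
import Mathlib

section
/- Let a < b be real numbers and let f : ℝ → ℝ be real-analytic on an open set U ⊆ ℝ containing the interval [a, b]. Then there exist constants C > 0 and ρ > 1 such that for every N ∈ ℕ there exist real polynomials P and Q with deg P + deg Q ≤ N, Q(x) ≠ 0 for all x ∈ [a, b], and sup_{x ∈ [a,b]} |f(x) − P(x)/Q(x)| ≤ C · ρ^{−N}. -/
/-!
Around each point `t` of `[a, b]` the partial sums of the Taylor series of `f` at `t` converge
like `2⁻ⁿ` on a ball of radius `r t`, and grow at most geometrically on all of `[a, b]`.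
Finitely many balls of radius `r t / 4` cover `[a, b]`. The local partial sums `Tₜ` are glued
by the rational weights `wₜ ∝ ((x - t) / r t) ^ (-2k)`: wherever `x` is outside the ball of `t`,
`wₜ` is at most `16⁻ᵏ` times the weight of a node within `r / 4` of `x`, which beats the growth
of `Tₜ` once `k` is a large multiple of `n`. The total degree is then linear in `n`.
-/

open Set Filter Polynomial Finset

def HasRatApprox (f : ℝ → ℝ) (s : Set ℝ) (N : ℕ) (ε : ℝ) : Prop :=
  ∃ P Q : ℝ[X], P.natDegree + Q.natDegree ≤ N ∧ (∀ x ∈ s, Q.eval x ≠ 0) ∧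
    ∀ x ∈ s, |f x - P.eval x / Q.eval x| ≤ ε

theorem HasRatApprox.mono {f : ℝ → ℝ} {s : Set ℝ} {N M : ℕ} {ε η : ℝ}
    (h : HasRatApprox f s N ε) (hNM : N ≤ M) (hεη : ε ≤ η) : HasRatApprox f s M η :=
  let ⟨P, Q, hdeg, hQ, hPQ⟩ := h
  ⟨P, Q, hdeg.trans hNM, hQ, fun x hx ↦ (hPQ x hx).trans hεη⟩

theorem exists_hasRatApprox_rpow_neg {f : ℝ → ℝ} {s : Set ℝ} {κ : ℕ} (hκ : 0 < κ)
    {C : ℝ} (h : ∀ n, HasRatApprox f s (κ * n) (C * (1 / 2) ^ n)) :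
    ∃ C > (0 : ℝ), ∃ ρ > (1 : ℝ), ∀ N : ℕ, HasRatApprox f s N (C * ρ ^ (-(N : ℝ))) := by
  have hκ' : (0 : ℝ) < κ := by exact_mod_cast hκ
  refine ⟨2 * max C 1, by positivity, 2 ^ (κ : ℝ)⁻¹, Real.one_lt_rpow (by norm_num) (by positivity),
    fun N ↦ (h (N / κ)).mono (Nat.mul_div_le N κ) ?_⟩
  have hN : (N : ℝ) / κ ≤ (N / κ : ℕ) + 1 := by
    rw [div_le_iff₀ hκ']
    exact_mod_cast (Nat.lt_mul_div_succ N hκ).le.trans_eq (mul_comm _ _)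
  have hpow : ((1 : ℝ) / 2) ^ (N / κ) ≤ 2 * (2 ^ (κ : ℝ)⁻¹) ^ (-(N : ℝ)) := by
    calc ((1 : ℝ) / 2) ^ (N / κ) = 2 ^ (-((N / κ : ℕ) : ℝ)) := by
          rw [Real.rpow_neg (by norm_num), Real.rpow_natCast, one_div, inv_pow]
      _ ≤ 2 ^ (1 + (κ : ℝ)⁻¹ * -N) := by
          apply Real.rpow_le_rpow_of_exponent_le (by norm_num)
          rw [mul_neg, inv_mul_eq_div]
          linarith
      _ = 2 * (2 ^ (κ : ℝ)⁻¹) ^ (-(N : ℝ)) := by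
          rw [Real.rpow_add (by norm_num), Real.rpow_one, Real.rpow_mul (by norm_num)]
  calc C * (1 / 2) ^ (N / κ) ≤ max C 1 * (2 * (2 ^ (κ : ℝ)⁻¹) ^ (-(N : ℝ))) := by
        gcongr
        exact le_max_left _ _
    _ = _ := by ring

namespace FormalMultilinearSeries

variable (p : FormalMultilinearSeries ℝ ℝ ℝ) (t : ℝ) (n : ℕ)

noncomputable def partialSumPoly : ℝ[X] :=
  ∑ i ∈ range n, C (p.coeff i) * (X - C t) ^ i

theorem eval_partialSumPoly (x : ℝ) : (p.partialSumPoly t n).eval x = p.partialSum n (x - t) := by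
  simp [partialSumPoly, partialSum, eval_finsetSum, mul_comm]

theorem natDegree_partialSumPoly_le : (p.partialSumPoly t n).natDegree ≤ n :=
  natDegree_sum_le_of_forall_le _ _ fun i hi ↦ natDegree_C_mul_le _ _ |>.trans <| by
    rw [natDegree_pow, natDegree_X_sub_C, mul_one]; exact (mem_range.1 hi).le

variable {p} in
theorem abs_partialSum_le {K ρ D : ℝ} (hρ : 0 < ρ) (hcoeff : ∀ i, |p.coeff i| ≤ K / ρ ^ i)
    {y : ℝ} (hy : |y| ≤ D) : |p.partialSum n y| ≤ K * (2 * max 1 (D / ρ)) ^ n := by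
  have hK : 0 ≤ K := by simpa using (abs_nonneg _).trans (hcoeff 0)
  have hD : 0 ≤ D := (abs_nonneg y).trans hy
  set L := max 1 (D / ρ)
  have hterm : ∀ i ∈ range n, |p (i) (fun _ ↦ y)| ≤ K * L ^ n := fun i hi ↦ by
    rw [apply_eq_pow_smul_coeff, smul_eq_mul, abs_mul, abs_pow]
    calc |y| ^ i * |p.coeff i| ≤ D ^ i * (K / ρ ^ i) := by
          gcongr
          exact hcoeff i
      _ = K * (D / ρ) ^ i := by rw [div_pow]; ring
      _ ≤ K * L ^ n := by
          gcongr
          calc (D / ρ) ^ i ≤ L ^ i := by gcongr; exact le_max_right _ _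
            _ ≤ L ^ n := pow_le_pow_right₀ (le_max_left _ _) (mem_range.1 hi).le
  calc |p.partialSum n y| ≤ ∑ i ∈ range n, K * L ^ n :=
        (abs_sum_le_sum_abs _ _).trans (sum_le_sum hterm)
    _ = n * (K * L ^ n) := by rw [sum_const, card_range, nsmul_eq_mul]
    _ ≤ 2 ^ n * (K * L ^ n) := by gcongr; exact_mod_cast n.lt_two_pow_self.le
    _ = K * (2 * L) ^ n := by ring

end FormalMultilinearSeries

open FormalMultilinearSeries in
theorem AnalyticAt.exists_partialSumPoly_bounds {f : ℝ → ℝ} {t : ℝ} (hf : AnalyticAt ℝ f t) :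
    ∃ r > 0, ∃ T : ℕ → ℝ[X], (∀ n, (T n).natDegree ≤ n) ∧ ∃ K ≥ 0,
      (∀ x, |x - t| < r → ∀ n, |f x - (T n).eval x| ≤ K * (1 / 2) ^ n) ∧
      ∀ D, ∃ L ≥ 1, ∀ x, |x - t| ≤ D → ∀ n, |(T n).eval x| ≤ K * L ^ n := by
  obtain ⟨p, R, hp⟩ := hf
  obtain ⟨ρ, hρ0, hρR⟩ := ENNReal.lt_iff_exists_nnreal_btwn.1 hp.r_pos
  have hρ : (0 : ℝ) < ρ := by exact_mod_cast hρ0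
  obtain ⟨a, ha, K₁, hK₁, hnear⟩ := hp.uniform_geometric_approx' hρR
  obtain ⟨K₂, hK₂, hcoeff⟩ :=
    p.norm_le_div_pow_of_pos_of_lt_radius (by exact_mod_cast hρ0) (hρR.trans_le hp.r_le)
  -- On the ball of radius `ρ / 2` the rate `a * (|x - t| / ρ)` is below `1 / 2` whatever `a` is.
  refine ⟨ρ / 2, by positivity, p.partialSumPoly t, p.natDegree_partialSumPoly_le t,
    max K₁ K₂, by positivity, fun x hx n ↦ ?_, fun D ↦ ⟨2 * max 1 (D / ρ), ?_, fun x hx n ↦ ?_⟩⟩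
  · have hxρ : x - t ∈ Metric.ball (0 : ℝ) ρ := by
      rw [mem_ball_zero_iff, Real.norm_eq_abs]; linarith
    have hrate₀ : 0 ≤ a * (|x - t| / ρ) := mul_nonneg ha.1.le (by positivity)
    have hrate : a * (|x - t| / ρ) ≤ 1 * (1 / 2) :=
      mul_le_mul ha.2.le ((div_le_iff₀ hρ).2 (by linarith)) (by positivity) zero_le_one
    have happrox := hnear _ hxρ n
    rw [add_sub_cancel, Real.norm_eq_abs, Real.norm_eq_abs] at happrox
    rw [eval_partialSumPoly]
    refine happrox.trans ?_
    calc K₁ * (a * (|x - t| / ρ)) ^ n ≤ max K₁ K₂ * (1 * (1 / 2)) ^ n := by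
          gcongr
          exact le_max_left _ _
      _ = max K₁ K₂ * (1 / 2) ^ n := by rw [one_mul]
  · linarith [le_max_left 1 (D / ρ)]
  · rw [eval_partialSumPoly]
    refine (abs_partialSum_le (K := K₂) n hρ (fun i ↦ ?_) hx).trans ?_
    · simpa using hcoeff i
    · gcongr; exact le_max_right _ _

theorem abs_sub_sum_mul_div_sum_le {ι : Type*} (s : Finset ι) {w u : ι → ℝ} {φ B : ℝ}
    (hw : ∀ i ∈ s, 0 ≤ w i) (hW : 0 < ∑ i ∈ s, w i)
    (hB : ∀ i ∈ s, |φ - u i| * w i ≤ B * ∑ j ∈ s, w j) :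
    |φ - (∑ i ∈ s, u i * w i) / ∑ i ∈ s, w i| ≤ #s * B := by
  have hsplit : φ - (∑ i ∈ s, u i * w i) / ∑ i ∈ s, w i
      = (∑ i ∈ s, (φ - u i) * w i) / ∑ i ∈ s, w i := by
    rw [eq_div_iff hW.ne', sub_mul, div_mul_cancel₀ _ hW.ne', mul_sum, ← sum_sub_distrib]
    exact sum_congr rfl fun i _ ↦ by ring
  rw [hsplit, abs_div, abs_of_pos hW, div_le_iff₀ hW]
  calc |∑ i ∈ s, (φ - u i) * w i| ≤ ∑ i ∈ s, |φ - u i| * w i := by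
        refine (abs_sum_le_sum_abs _ _).trans_eq (sum_congr rfl fun i hi ↦ ?_)
        rw [abs_mul, abs_of_nonneg (hw i hi)]
    _ ≤ ∑ _i ∈ s, B * ∑ j ∈ s, w j := sum_le_sum hB
    _ = #s * B * ∑ j ∈ s, w j := by rw [sum_const, nsmul_eq_mul, mul_assoc]

section EvenPowers

variable {ι : Type*} [DecidableEq ι] {s : Finset ι} {d : ι → ℝ} (k : ℕ)

theorem prod_erase_pow_le {i j : ι} (hi : i ∈ s) (hj : j ∈ s) {c : ℝ} (hdi : 1 ≤ |d i|)
    (hdj : |d j| ≤ c) :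
    ∏ l ∈ s.erase i, d l ^ (2 * k) ≤ c ^ (2 * k) * ∏ l ∈ s.erase j, d l ^ (2 * k) := by
  have heven : Even (2 * k) := even_two_mul k
  have hnonneg : 0 ≤ ∏ l ∈ s.erase i, d l ^ (2 * k) :=
    prod_nonneg fun l _ ↦ heven.pow_nonneg _
  calc ∏ l ∈ s.erase i, d l ^ (2 * k) ≤ (∏ l ∈ s.erase i, d l ^ (2 * k)) * d i ^ (2 * k) := by
        refine le_mul_of_one_le_right hnonneg ?_
        rw [← heven.pow_abs]
        exact one_le_pow₀ hdi
    _ = (∏ l ∈ s.erase j, d l ^ (2 * k)) * d j ^ (2 * k) := by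
        rw [prod_erase_mul _ _ hi, prod_erase_mul _ _ hj]
    _ ≤ (∏ l ∈ s.erase j, d l ^ (2 * k)) * c ^ (2 * k) := by
        refine mul_le_mul_of_nonneg_left ?_ (prod_nonneg fun l _ ↦ heven.pow_nonneg _)
        rw [← heven.pow_abs]
        exact pow_le_pow_left₀ (abs_nonneg _) hdj _
    _ = _ := mul_comm _ _

theorem sum_prod_erase_pow_pos (hs : s.Nonempty)
    (hd : ∀ i ∈ s, ∀ j ∈ s, d i = 0 → d j = 0 → i = j) :
    0 < ∑ i ∈ s, ∏ l ∈ s.erase i, d l ^ (2 * k) := by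
  have heven : Even (2 * k) := even_two_mul k
  obtain ⟨i, hi, hother⟩ : ∃ i ∈ s, ∀ l ∈ s.erase i, d l ≠ 0 := by
    by_cases hzero : ∃ i ∈ s, d i = 0
    · obtain ⟨i, hi, hdi⟩ := hzero
      exact ⟨i, hi, fun l hl hdl ↦ (ne_of_mem_erase hl) (hd l (mem_of_mem_erase hl) i hi hdl hdi)⟩
    · push Not at hzero
      obtain ⟨i, hi⟩ := hs
      exact ⟨i, hi, fun l hl ↦ hzero l (mem_of_mem_erase hl)⟩
  refine sum_pos' (fun j _ ↦ prod_nonneg fun l _ ↦ heven.pow_nonneg _) ⟨i, hi, ?_⟩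
  exact prod_pos fun l hl ↦ heven.pow_pos (hother l hl)

end EvenPowers

section Blend

variable (S : Finset ℝ) (r : ℝ → ℝ) (k : ℕ)

/-- Up to the common factor `∏ₛ ((x - s) / r s) ^ (2k)`, this is `((x - t) / r t) ^ (-2k)`. -/
noncomputable def blendWeight (t : ℝ) : ℝ[X] :=
  ∏ s ∈ S.erase t, (C (r s)⁻¹ * (X - C s)) ^ (2 * k)

theorem eval_blendWeight (t x : ℝ) :
    (blendWeight S r k t).eval x = ∏ s ∈ S.erase t, ((r s)⁻¹ * (x - s)) ^ (2 * k) := by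
  simp [blendWeight, eval_prod]

theorem eval_blendWeight_nonneg (t x : ℝ) : 0 ≤ (blendWeight S r k t).eval x := by
  rw [eval_blendWeight]
  exact prod_nonneg fun _ _ ↦ (even_two_mul k).pow_nonneg _

theorem natDegree_blendWeight_le (t : ℝ) : (blendWeight S r k t).natDegree ≤ 2 * k * #S := by
  refine (natDegree_prod_le _ _).trans ?_
  calc ∑ s ∈ S.erase t, ((C (r s)⁻¹ * (X - C s)) ^ (2 * k)).natDegree
      ≤ ∑ _s ∈ S, 2 * k := by
        refine (sum_le_sum fun s _ ↦ natDegree_pow_le.trans ?_).trans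
          (sum_le_sum_of_subset (erase_subset t S))
        exact (Nat.mul_le_mul_left _
          ((natDegree_C_mul_le _ _).trans (natDegree_X_sub_C s).le)).trans_eq (mul_one _)
    _ = 2 * k * #S := by rw [sum_const, smul_eq_mul, mul_comm]

variable {S r}

theorem sum_eval_blendWeight_pos (hr : ∀ t ∈ S, 0 < r t) (hS : S.Nonempty) (x : ℝ) :
    0 < ∑ t ∈ S, (blendWeight S r k t).eval x := by
  simp only [eval_blendWeight]
  refine sum_prod_erase_pow_pos k hS fun t ht t' ht' h h' ↦ ?_
  rw [mul_eq_zero, inv_eq_zero, sub_eq_zero] at h h'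
  exact (h.resolve_left (hr t ht).ne').symm.trans (h'.resolve_left (hr t' ht').ne')

theorem eval_blendWeight_le_of_le_abs_sub {t t₀ x : ℝ} (ht : t ∈ S) (ht₀ : t₀ ∈ S)
    (hrt : 0 < r t) (hrt₀ : 0 < r t₀) (hxt : r t ≤ |x - t|) (hxt₀ : |x - t₀| ≤ r t₀ / 4) :
    (blendWeight S r k t).eval x ≤ (1 / 16) ^ k * (blendWeight S r k t₀).eval x := by
  rw [eval_blendWeight, eval_blendWeight,
    show (1 / 16 : ℝ) ^ k = (1 / 4) ^ (2 * k) by rw [pow_mul]; norm_num]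
  refine prod_erase_pow_le (d := fun s ↦ (r s)⁻¹ * (x - s)) k ht ht₀ ?_ ?_
  · rw [abs_mul, abs_inv, abs_of_pos hrt, inv_mul_eq_div, one_le_div hrt]
    exact hxt
  · rw [abs_mul, abs_inv, abs_of_pos hrt₀, inv_mul_le_iff₀ hrt₀]
    linarith

end Blend

theorem hasRatApprox_blend {f : ℝ → ℝ} {s : Set ℝ} {S : Finset ℝ} {r : ℝ → ℝ}
    (hr : ∀ t ∈ S, 0 < r t) (hcover : ∀ x ∈ s, ∃ t ∈ S, |x - t| ≤ r t / 4)
    {T : ℝ → ℝ[X]} {n : ℕ} (hdeg : ∀ t ∈ S, (T t).natDegree ≤ n) {ε η : ℝ}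
    (hnear : ∀ t ∈ S, ∀ x ∈ s, |x - t| < r t → |f x - (T t).eval x| ≤ ε)
    (hfar : ∀ t ∈ S, ∀ x ∈ s, |f x - (T t).eval x| ≤ η) (k : ℕ) :
    HasRatApprox f s (n + 4 * k * #S) (#S * (ε + η / 16 ^ k)) := by
  set W := blendWeight S r k
  have hW : ∀ x ∈ s, 0 < ∑ t ∈ S, (W t).eval x := fun x hx ↦
    let ⟨t₀, ht₀, _⟩ := hcover x hx
    sum_eval_blendWeight_pos k hr ⟨t₀, ht₀⟩ x
  refine ⟨∑ t ∈ S, T t * W t, ∑ t ∈ S, W t, ?_, fun x hx ↦ ?_, fun x hx ↦ ?_⟩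
  · have hP : (∑ t ∈ S, T t * W t).natDegree ≤ n + 2 * k * #S :=
      natDegree_sum_le_of_forall_le _ _ fun t ht ↦
        natDegree_mul_le.trans (add_le_add (hdeg t ht) (natDegree_blendWeight_le S r k t))
    have hQ : (∑ t ∈ S, W t).natDegree ≤ 2 * k * #S :=
      natDegree_sum_le_of_forall_le _ _ fun t _ ↦ natDegree_blendWeight_le S r k t
    linarith
  · rw [eval_finsetSum]; exact (hW x hx).ne'
  simp only [eval_finsetSum, eval_mul]
  obtain ⟨t₀, ht₀, hxt₀⟩ := hcover x hx
  have hε : 0 ≤ ε :=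
    (abs_nonneg _).trans (hnear t₀ ht₀ x hx (by linarith [abs_nonneg (x - t₀), hr t₀ ht₀]))
  have hη : 0 ≤ η := (abs_nonneg _).trans (hfar t₀ ht₀ x hx)
  refine abs_sub_sum_mul_div_sum_le S (fun t _ ↦ eval_blendWeight_nonneg S r k t x) (hW x hx)
    fun t ht ↦ ?_
  have hle : ∀ t ∈ S, (W t).eval x ≤ ∑ t' ∈ S, (W t').eval x := fun t ht ↦
    single_le_sum (fun t' _ ↦ eval_blendWeight_nonneg S r k t' x) ht
  by_cases hxt : |x - t| < r t
  · calc |f x - (T t).eval x| * (W t).eval x ≤ ε * ∑ t' ∈ S, (W t').eval x :=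
          mul_le_mul (hnear t ht x hx hxt) (hle t ht) (eval_blendWeight_nonneg S r k t x) hε
      _ ≤ (ε + η / 16 ^ k) * ∑ t' ∈ S, (W t').eval x :=
          mul_le_mul_of_nonneg_right (le_add_of_nonneg_right (by positivity)) (hW x hx).le
  · calc |f x - (T t).eval x| * (W t).eval x ≤ η * ((1 / 16) ^ k * (W t₀).eval x) :=
          mul_le_mul (hfar t ht x hx) (eval_blendWeight_le_of_le_abs_sub k ht ht₀ (hr t ht)
            (hr t₀ ht₀) (not_lt.1 hxt) hxt₀) (eval_blendWeight_nonneg S r k t x) hη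
      _ ≤ η / 16 ^ k * ∑ t' ∈ S, (W t').eval x := by
          rw [one_div_pow, ← mul_assoc, mul_one_div]
          gcongr
          exact hle t₀ ht₀
      _ ≤ (ε + η / 16 ^ k) * ∑ t' ∈ S, (W t').eval x :=
          mul_le_mul_of_nonneg_right (le_add_of_nonneg_left hε) (hW x hx).le

theorem abs_sub_le_add_mul_pow {u v M B L : ℝ} {n : ℕ} (hu : |u| ≤ M) (hv : |v| ≤ B * L ^ n)
    (hL : 1 ≤ L) : |u - v| ≤ (M + B) * L ^ n :=
  calc |u - v| ≤ |u| + |v| := abs_sub _ _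
    _ ≤ M * L ^ n + B * L ^ n :=
        add_le_add (hu.trans (le_mul_of_one_le_right ((abs_nonneg u).trans hu) (one_le_pow₀ hL))) hv
    _ = (M + B) * L ^ n := (add_mul _ _ _).symm

theorem IsCompact.exists_local_poly_approx {K : Set ℝ} (hK : IsCompact K) {f : ℝ → ℝ}
    (hf : AnalyticOnNhd ℝ f K) :
    ∃ (S : Finset ℝ) (r : ℝ → ℝ) (T : ℝ → ℕ → ℝ[X]) (A L : ℝ), 0 ≤ A ∧ 0 ≤ L ∧
      (∀ t ∈ S, 0 < r t) ∧ (∀ x ∈ K, ∃ t ∈ S, |x - t| ≤ r t / 4) ∧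
      (∀ t ∈ S, ∀ n, (T t n).natDegree ≤ n) ∧
      (∀ t ∈ S, ∀ x ∈ K, |x - t| < r t → ∀ n, |f x - (T t n).eval x| ≤ A * (1 / 2) ^ n) ∧
      ∀ t ∈ S, ∀ x ∈ K, ∀ n, |f x - (T t n).eval x| ≤ A * L ^ n := by
  choose! r hr T hTdeg B hB hnear hfar using fun t ht ↦ (hf t ht).exists_partialSumPoly_bounds
  obtain ⟨S, hSK, hcover⟩ := hK.elim_nhds_subcover (fun t ↦ Metric.ball t (r t / 4))
    fun t ht ↦ Metric.ball_mem_nhds t (by linarith [hr t ht])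
  obtain ⟨M, hM⟩ := hK.exists_bound_of_continuousOn hf.continuousOn
  obtain ⟨D, hD⟩ := Metric.isBounded_iff.1 hK.isBounded
  -- Both bounds are monotone in `c`, so the finitely many nodes can share one pair `c = (A, L)`.
  have huniform : ∀ t ∈ S, ∀ᶠ c : ℝ × ℝ in atTop,
      (∀ x ∈ K, |x - t| < r t → ∀ n, |f x - (T t n).eval x| ≤ c.1 * (1 / 2) ^ n) ∧
      ∀ x ∈ K, ∀ n, |f x - (T t n).eval x| ≤ c.1 * c.2 ^ n := by
    intro t ht
    have htK := hSK t ht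
    obtain ⟨L₀, hL₀, hL⟩ := hfar t htK D
    filter_upwards [eventually_ge_atTop (max (B t) (M + B t), L₀)] with c hc
    obtain ⟨hc₁, hc₂⟩ := Prod.mk_le_mk.1 hc
    have hBc : B t ≤ c.1 := (le_max_left _ _).trans hc₁
    refine ⟨fun x hx hxt n ↦ ?_, fun x hx n ↦ ?_⟩
    · exact (hnear t htK x hxt n).trans (mul_le_mul_of_nonneg_right hBc (by positivity))
    · have hxt : |x - t| ≤ D := by rw [← Real.dist_eq]; exact hD hx htK
      refine (abs_sub_le_add_mul_pow (Real.norm_eq_abs (f x) ▸ hM x hx) (hL x hxt n) hL₀).trans ?_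
      exact mul_le_mul ((le_max_right _ _).trans hc₁) (pow_le_pow_left₀ (by linarith) hc₂ n)
        (by positivity) ((hB t htK).trans hBc)
  obtain ⟨⟨A, L⟩, hAL, hAL₀⟩ :=
    (((eventually_all_finset S).2 huniform).and (eventually_ge_atTop 0)).exists
  refine ⟨S, r, T, A, L, (Prod.mk_le_mk.1 hAL₀).1, (Prod.mk_le_mk.1 hAL₀).2,
    fun t ht ↦ hr t (hSK t ht), fun x hx ↦ ?_, fun t ht ↦ hTdeg t (hSK t ht),
    fun t ht ↦ (hAL t ht).1, fun t ht ↦ (hAL t ht).2⟩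
  obtain ⟨t, ht, hxt⟩ := mem_iUnion₂.1 (hcover hx)
  exact ⟨t, ht, (Real.dist_eq x t ▸ Metric.mem_ball.1 hxt).le⟩

theorem IsCompact.exists_hasRatApprox_half_pow {K : Set ℝ} (hK : IsCompact K) {f : ℝ → ℝ}
    (hf : AnalyticOnNhd ℝ f K) : ∃ κ > 0, ∃ C, ∀ n, HasRatApprox f K (κ * n) (C * (1 / 2) ^ n) := by
  obtain ⟨S, r, T, A, L, hA, hL, hr, hcover, hdeg, hnear, hfar⟩ := hK.exists_local_poly_approx hf
  obtain ⟨m, hm⟩ := pow_unbounded_of_one_lt (2 * L) (by norm_num : (1 : ℝ) < 16)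
  refine ⟨1 + 4 * m * #S, by omega, 2 * #S * A, fun n ↦ ?_⟩
  refine (hasRatApprox_blend hr hcover (fun t ht ↦ hdeg t ht n)
    (fun t ht x hx hxt ↦ hnear t ht x hx hxt n) (fun t ht x hx ↦ hfar t ht x hx n) (m * n)).mono
    (le_of_eq (by ring)) ?_
  have hrate : L ^ n / 16 ^ (m * n) ≤ (1 / 2) ^ n := by
    rw [pow_mul, ← div_pow]
    refine pow_le_pow_left₀ (by positivity) ?_ n
    rw [div_le_iff₀ (by positivity)]
    linarith
  calc (#S : ℝ) * (A * (1 / 2) ^ n + A * L ^ n / 16 ^ (m * n))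
      ≤ #S * (A * (1 / 2) ^ n + A * (1 / 2) ^ n) := by
        rw [mul_div_assoc]; gcongr
    _ = 2 * #S * A * (1 / 2) ^ n := by ring

theorem rational_approximation_analytic_geometric_rate_general
    (a b : ℝ) (U : Set ℝ) (hsub : Set.Icc a b ⊆ U)
    (f : ℝ → ℝ) (hf : AnalyticOnNhd ℝ f U) :
    ∃ C > (0 : ℝ), ∃ ρ > (1 : ℝ), ∀ N : ℕ,
      ∃ P Q : Polynomial ℝ,
        P.natDegree + Q.natDegree ≤ N ∧
        (∀ x ∈ Set.Icc a b, Q.eval x ≠ 0) ∧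
        ∀ x ∈ Set.Icc a b, |f x - P.eval x / Q.eval x| ≤ C * ρ ^ (-(N : ℝ)) := by
  obtain ⟨κ, hκ, C, hC⟩ := isCompact_Icc.exists_hasRatApprox_half_pow (hf.mono hsub)
  exact exists_hasRatApprox_rpow_neg hκ hC

/-- **Geometric rate of best rational approximation for analytic functions.**
If `f` is real-analytic on an open set `U ⊇ [a, b]`, then there are `C > 0` and `ρ > 1` so that
for every total degree budget `N` there is a rational function `P/Q` with
`deg P + deg Q ≤ N`, `Q` nonvanishing on `[a, b]`, and uniform error at most `C · ρ^{-N}`. -/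
theorem rational_approximation_analytic_geometric_rate
    (a b : ℝ) (hab : a < b) (U : Set ℝ) (hU : IsOpen U) (hsub : Set.Icc a b ⊆ U)
    (f : ℝ → ℝ) (hf : AnalyticOnNhd ℝ f U) :
    ∃ C > (0 : ℝ), ∃ ρ > (1 : ℝ), ∀ N : ℕ,
      ∃ P Q : Polynomial ℝ,
        P.natDegree + Q.natDegree ≤ N ∧
        (∀ x ∈ Set.Icc a b, Q.eval x ≠ 0) ∧
        ∀ x ∈ Set.Icc a b, |f x - P.eval x / Q.eval x| ≤ C * ρ ^ (-(N : ℝ)) :=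
  rational_approximation_analytic_geometric_rate_general a b U hsub f hf
end

section
/- There exist constants C > 0 and c > 0 such that for every natural number N ≥ 1 there exist real polynomials P and Q with deg P ≤ N, deg Q ≤ N, Q(x) ≠ 0 for all x ∈ [−1, 1], and sup_{x ∈ [−1,1]} | |x| − P(x)/Q(x) | ≤ C · exp(−c·√N). -/
open Finset

private lemma newman_factor (a b : ℝ) (ha : 0 ≤ a) (hb : 0 < b) :
    |a - b| ≤ Real.exp (-(min a b / max a b)) * (a + b) := by
  rcases le_total a b with h | h
  · rw [min_eq_left h, max_eq_right h, abs_of_nonpos (by linarith)]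
    have hE : 1 - a/b ≤ Real.exp (-(a/b)) := by
      have := Real.add_one_le_exp (-(a/b)); linarith
    have hq : a/b * b = a := div_mul_cancel₀ a hb.ne'
    have hq1 : a/b ≤ 1 := (div_le_one hb).2 h
    have hq0 : 0 ≤ a/b := div_nonneg ha hb.le
    nlinarith [mul_le_mul_of_nonneg_right hE (show (0:ℝ) ≤ a + b by linarith)]
  · have hb' : 0 < a := lt_of_lt_of_le hb h
    rw [min_eq_right h, max_eq_left h, abs_of_nonneg (by linarith)]
    have hE : 1 - b/a ≤ Real.exp (-(b/a)) := by
      have := Real.add_one_le_exp (-(b/a)); linarith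
    have hq : b/a * a = b := div_mul_cancel₀ b hb'.ne'
    have hq1 : b/a ≤ 1 := (div_le_one hb').2 h
    have hq0 : 0 ≤ b/a := div_nonneg hb.le hb'.le
    nlinarith [mul_le_mul_of_nonneg_right hE (show (0:ℝ) ≤ a + b by linarith)]

private lemma newman_exp_neg_two : Real.exp (-2 : ℝ) ≤ 1/4 := by
  rw [Real.exp_neg]
  have h2e : (2:ℝ) ≤ Real.exp 1 := by have := Real.add_one_le_exp 1; linarith
  have h4 : (4:ℝ) ≤ Real.exp 2 := by
    have : Real.exp 2 = Real.exp 1 * Real.exp 1 := by rw [← Real.exp_add]; norm_num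
    nlinarith
  rw [inv_le_comm₀ (by positivity) (by norm_num)]
  linarith

private lemma newman_sqrt_ge (n : ℕ) (hn : 16 ≤ n) : (4:ℝ) ≤ Real.sqrt n := by
  have h16 : (16:ℝ) ≤ (n:ℝ) := by exact_mod_cast hn
  have h := Real.sqrt_le_sqrt h16
  rwa [show Real.sqrt 16 = 4 by
    rw [show (16:ℝ) = 4^2 by norm_num, Real.sqrt_sq (by norm_num)]] at h

private lemma newman_geom (n s : ℕ) (hn : 16 ≤ n) (hs : n ≤ 2 * s) :
    Real.sqrt n / 2 ≤ ∑ j ∈ Finset.range s, Real.exp (-1/Real.sqrt n) ^ (j+1) := by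
  set ξ := Real.exp (-1/Real.sqrt n) with hξdef
  have h16 : (16:ℝ) ≤ (n:ℝ) := by exact_mod_cast hn
  have hs4 : (4:ℝ) ≤ Real.sqrt n := newman_sqrt_ge n hn
  have hsn : (0:ℝ) < Real.sqrt n := by linarith
  have hξpos : 0 < ξ := Real.exp_pos _
  have hξlt1 : ξ < 1 := by
    rw [hξdef, Real.exp_lt_one_iff]
    exact div_neg_of_neg_of_pos (by norm_num) hsn
  have h1ξ : 1 - 1/Real.sqrt n ≤ ξ := by
    have h := Real.add_one_le_exp (-1/Real.sqrt n)
    rw [hξdef]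
    linarith [h, (by ring : (-1)/Real.sqrt n = -(1/Real.sqrt n))]
  have hinv : 1/Real.sqrt n ≤ 1/4 := by
    rw [div_le_div_iff₀ hsn (by norm_num)]; linarith
  have h34 : (3:ℝ)/4 ≤ ξ := by linarith
  have hnsq : (n:ℝ) / Real.sqrt n = Real.sqrt n := Real.div_sqrt
  have hxs : ξ ^ s ≤ 1/4 := by
    have h2 : (2:ℝ) ≤ (s:ℝ) / Real.sqrt n := by
      have hsr : (n:ℝ)/2 ≤ (s:ℝ) := by
        have : (n:ℝ) ≤ 2*(s:ℝ) := by exact_mod_cast hs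
        linarith
      rw [le_div_iff₀ hsn]
      have hnn : (n:ℝ) = Real.sqrt n * Real.sqrt n := (Real.mul_self_sqrt (by positivity)).symm
      nlinarith
    have : ξ ^ s = Real.exp ((s:ℝ) * (-1/Real.sqrt n)) := by
      rw [Real.exp_nat_mul]
    rw [this]
    have he2 : Real.exp ((s:ℝ) * (-1/Real.sqrt n)) ≤ Real.exp (-2) := by
      apply Real.exp_le_exp.2
      have : (s:ℝ) * (-1/Real.sqrt n) = -((s:ℝ)/Real.sqrt n) := by ring
      rw [this]; linarith
    linarith [newman_exp_neg_two]
  have hgeom : ∑ j ∈ Finset.range s, ξ ^ (j+1) = (1 - ξ^s)/(1-ξ) * ξ := by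
    have : ∑ j ∈ Finset.range s, ξ ^ (j+1) = (∑ j ∈ Finset.range s, ξ ^ j) * ξ := by
      rw [Finset.sum_mul]
      exact Finset.sum_congr rfl fun j _ => by rw [pow_succ]
    rw [this, geom_sum_eq hξlt1.ne]
    congr 1
    rw [div_eq_div_iff (by intro h; nlinarith : ξ - 1 ≠ 0) (by intro h; nlinarith : 1 - ξ ≠ 0)]
    ring
  rw [hgeom]
  have hD : 0 < 1 - ξ := by linarith
  rw [div_mul_eq_mul_div, le_div_iff₀ hD]
  have hone : Real.sqrt n * (1/Real.sqrt n) = 1 := by field_simp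
  nlinarith [pow_nonneg hξpos.le s]

private lemma newman_core (n : ℕ) (hn : 16 ≤ n) (x : ℝ) (hx0 : 0 ≤ x) (hx1 : x ≤ 1) :
    0 < (∏ k ∈ Finset.range n, (x + Real.exp (-1/Real.sqrt n) ^ k)) +
        (∏ k ∈ Finset.range n, (Real.exp (-1/Real.sqrt n) ^ k - x)) ∧
    |x - x * ((∏ k ∈ Finset.range n, (x + Real.exp (-1/Real.sqrt n) ^ k)) -
        (∏ k ∈ Finset.range n, (Real.exp (-1/Real.sqrt n) ^ k - x))) /
        ((∏ k ∈ Finset.range n, (x + Real.exp (-1/Real.sqrt n) ^ k)) +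
        (∏ k ∈ Finset.range n, (Real.exp (-1/Real.sqrt n) ^ k - x)))|
      ≤ 4 * Real.exp (-(Real.sqrt n / 2)) := by
  set ξ := Real.exp (-1/Real.sqrt n) with hξdef
  set pb := ∏ k ∈ Finset.range n, (x + ξ ^ k) with hpbdef
  set pm := ∏ k ∈ Finset.range n, (ξ ^ k - x) with hpmdef
  have hs4 : (4:ℝ) ≤ Real.sqrt n := newman_sqrt_ge n hn
  have hsn : (0:ℝ) < Real.sqrt n := by linarith
  have hξpos : 0 < ξ := Real.exp_pos _
  have hξlt1 : ξ < 1 := by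
    rw [hξdef, Real.exp_lt_one_iff]
    exact div_neg_of_neg_of_pos (by norm_num) hsn
  have hpbpos : 0 < pb := Finset.prod_pos fun k _ => by positivity
  have hξn : ξ ^ n = Real.exp (-Real.sqrt n) := by
    rw [hξdef, ← Real.exp_nat_mul]
    congr 1
    rw [show (n:ℝ) * (-1/Real.sqrt n) = -((n:ℝ)/Real.sqrt n) by ring, Real.div_sqrt]
  have hE2 : Real.exp (-(Real.sqrt n / 2)) ≤ 1/4 := by
    have : Real.exp (-(Real.sqrt n / 2)) ≤ Real.exp (-2) :=
      Real.exp_le_exp.2 (by linarith)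
    linarith [newman_exp_neg_two]
  rcases le_or_gt x (ξ ^ n) with hcase | hcase
  · -- small x
    have hxk : ∀ k ∈ Finset.range n, x ≤ ξ ^ k := fun k hk =>
      hcase.trans (pow_le_pow_of_le_one hξpos.le hξlt1.le (Finset.mem_range.1 hk).le)
    have hpm0 : 0 ≤ pm := Finset.prod_nonneg fun k hk => by linarith [hxk k hk]
    have hpmpb : pm ≤ pb := Finset.prod_le_prod
      (fun k hk => by linarith [hxk k hk]) (fun k hk => by linarith [hx0])
    have hQ : 0 < pb + pm := by linarith
    refine ⟨hQ, ?_⟩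
    have herr : x - x * (pb - pm) / (pb + pm) = 2*x*pm/(pb+pm) := by
      field_simp; ring
    rw [herr, abs_of_nonneg (by positivity)]
    have h1 : 2*x*pm/(pb+pm) ≤ 2*x := by
      rw [div_le_iff₀ hQ]; nlinarith
    have h2 : x ≤ Real.exp (-Real.sqrt n) := by rw [← hξn]; exact hcase
    have h3 : Real.exp (-Real.sqrt n) ≤ Real.exp (-(Real.sqrt n / 2)) :=
      Real.exp_le_exp.2 (by linarith)
    linarith [Real.exp_pos (-(Real.sqrt n / 2))]
  · -- main case
    have hx0' : 0 < x := lt_trans (by positivity) hcase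
    have hex : ∃ k, ξ ^ k < x := ⟨n, hcase⟩
    set m := Nat.find hex with hmdef
    have hm : ξ ^ m < x := Nat.find_spec hex
    have hmn : m ≤ n := Nat.find_min' hex hcase
    have hupper : ∀ k < m, x ≤ ξ ^ k := fun k hk => le_of_not_gt (Nat.find_min hex hk)
    have hm1 : 1 ≤ m := by
      rcases Nat.eq_zero_or_pos m with h0 | h; · exfalso; rw [h0, pow_zero] at hm; linarith
      exact h
    have hxm1 : x ≤ ξ ^ (m-1) := hupper (m-1) (by omega)
    set t : ℕ → ℝ := fun k => min x (ξ^k) / max x (ξ^k) with htdef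
    have htnn : ∀ k, 0 ≤ t k := fun k =>
      div_nonneg (le_min hx0 (pow_nonneg hξpos.le k)) (le_trans hx0 (le_max_left _ _))
    have hsum : Real.sqrt n / 2 ≤ ∑ k ∈ Finset.range n, t k := by
      by_cases hside : n ≤ 2*m
      · calc Real.sqrt n / 2 ≤ ∑ j ∈ Finset.range m, ξ^(j+1) := newman_geom n m hn hside
          _ = ∑ k ∈ Finset.range m, ξ^(m-k) := by
              rw [← Finset.sum_range_reflect (fun j => ξ^(j+1)) m]
              exact Finset.sum_congr rfl fun k hk => by
                congr 1; have := Finset.mem_range.1 hk; omega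
          _ ≤ ∑ k ∈ Finset.range m, t k := by
              apply Finset.sum_le_sum
              intro k hk
              have hk' := Finset.mem_range.1 hk
              have hxk : x ≤ ξ^k := hupper k hk'
              rw [htdef]
              simp only [min_eq_left hxk, max_eq_right hxk]
              rw [le_div_iff₀ (pow_pos hξpos k), ← pow_add]
              rw [Nat.sub_add_cancel hk'.le]
              exact hm.le
          _ ≤ ∑ k ∈ Finset.range n, t k :=
              Finset.sum_le_sum_of_subset_of_nonneg
                (Finset.range_subset_range.2 hmn) (fun k _ _ => htnn k)
      · calc Real.sqrt n / 2 ≤ ∑ j ∈ Finset.range (n-m), ξ^(j+1) :=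
              newman_geom n (n-m) hn (by omega)
          _ = ∑ k ∈ Finset.Ico m n, ξ^(k-m+1) := by
              rw [Finset.sum_Ico_eq_sum_range]
              exact Finset.sum_congr rfl fun j hj => by congr 1; omega
          _ ≤ ∑ k ∈ Finset.Ico m n, t k := by
              apply Finset.sum_le_sum
              intro k hk
              have hk' := Finset.mem_Ico.1 hk
              have hξkx : ξ^k ≤ x := by
                calc ξ^k ≤ ξ^m := pow_le_pow_of_le_one hξpos.le hξlt1.le hk'.1
                  _ ≤ x := hm.le
              rw [htdef]
              simp only [min_eq_right hξkx, max_eq_left hξkx]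
              rw [le_div_iff₀ hx0']
              calc ξ^(k-m+1) * x ≤ ξ^(k-m+1) * ξ^(m-1) :=
                    mul_le_mul_of_nonneg_left hxm1 (pow_nonneg hξpos.le _)
                _ = ξ^k := by rw [← pow_add]; congr 1; omega
          _ ≤ ∑ k ∈ Finset.range n, t k := by
              rw [Finset.range_eq_Ico]
              exact Finset.sum_le_sum_of_subset_of_nonneg
                (Finset.Ico_subset_Ico (Nat.zero_le m) le_rfl) (fun k _ _ => htnn k)
    have hA : |pm| ≤ Real.exp (-(Real.sqrt n / 2)) * pb := by
      calc |pm| = ∏ k ∈ Finset.range n, |ξ^k - x| := by rw [hpmdef, Finset.abs_prod]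
        _ ≤ ∏ k ∈ Finset.range n, (Real.exp (-(t k)) * (x + ξ^k)) := by
            apply Finset.prod_le_prod (fun k _ => abs_nonneg _)
            intro k _
            rw [abs_sub_comm]
            exact newman_factor x (ξ^k) hx0 (pow_pos hξpos k)
        _ = Real.exp (-∑ k ∈ Finset.range n, t k) * pb := by
            rw [Finset.prod_mul_distrib, ← Real.exp_sum, hpbdef]
            congr 1
            rw [← Finset.sum_neg_distrib]
        _ ≤ Real.exp (-(Real.sqrt n / 2)) * pb :=
            mul_le_mul_of_nonneg_right (Real.exp_le_exp.2 (by linarith)) hpbpos.le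
    have hpm14 : |pm| ≤ 1/4 * pb := by nlinarith
    have hpmlb : -(1/4) * pb ≤ pm := by
      have := (abs_le.1 hpm14).1; linarith
    have hQ : 0 < pb + pm := by nlinarith
    refine ⟨hQ, ?_⟩
    have herr : x - x * (pb - pm) / (pb + pm) = 2*x*pm/(pb+pm) := by
      field_simp; ring
    rw [herr, abs_div, abs_of_pos hQ, abs_mul, abs_mul]
    rw [abs_of_nonneg (by norm_num : (0:ℝ) ≤ 2), abs_of_nonneg hx0]
    have hQ34 : 3/4 * pb ≤ pb + pm := by linarith
    have hnum : 2 * x * |pm| ≤ 2 * (Real.exp (-(Real.sqrt n / 2)) * pb) := by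
      nlinarith [abs_nonneg pm]
    calc 2 * x * |pm| / (pb + pm) ≤ 2 * (Real.exp (-(Real.sqrt n / 2)) * pb) / (3/4 * pb) := by
          apply div_le_div₀ (by positivity) hnum (by positivity) hQ34
      _ = 8/3 * Real.exp (-(Real.sqrt n / 2)) := by field_simp; ring
      _ ≤ 4 * Real.exp (-(Real.sqrt n / 2)) := by linarith [Real.exp_pos (-(Real.sqrt n / 2))]

open Polynomial

/-- **Near-root-exponential rational approximation of `|x|` on `[-1, 1]`.**
There are constants `C, c > 0` such that for each `N ≥ 1` there is a rational function `P/Q`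
with `deg P ≤ N`, `deg Q ≤ N`, `Q` nonvanishing on `[-1, 1]`, and
`sup_{x ∈ [-1,1]} ||x| - P x / Q x| ≤ C · exp(-c√N)`. -/
theorem rational_approximation_abs_root_exponential :
    ∃ C > (0 : ℝ), ∃ c > (0 : ℝ), ∀ N : ℕ, 1 ≤ N →
      ∃ P Q : Polynomial ℝ,
        P.natDegree ≤ N ∧ Q.natDegree ≤ N ∧
        (∀ x ∈ Set.Icc (-1 : ℝ) 1, Q.eval x ≠ 0) ∧
        ∀ x ∈ Set.Icc (-1 : ℝ) 1,
          |(|x| - P.eval x / Q.eval x)| ≤ C * Real.exp (-c * Real.sqrt N) := by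
  refine ⟨9, by norm_num, 1/2, by norm_num, ?_⟩
  intro N hN
  by_cases hN16 : N ≤ 16
  · refine ⟨0, 1, by simp, by simp, by simp, ?_⟩
    intro x hx
    simp only [Polynomial.eval_zero, Polynomial.eval_one, zero_div, sub_zero, abs_abs]
    have h1 : |x| ≤ 1 := abs_le.2 ⟨hx.1, hx.2⟩
    have hsN : Real.sqrt N ≤ 4 := by
      have h16 : (N:ℝ) ≤ 16 := by exact_mod_cast hN16
      calc Real.sqrt N ≤ Real.sqrt 16 := Real.sqrt_le_sqrt h16
        _ = 4 := by rw [show (16:ℝ) = 4^2 by norm_num, Real.sqrt_sq (by norm_num)]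
    have hE : Real.exp (-2) ≤ Real.exp (-(1/2) * Real.sqrt N) :=
      Real.exp_le_exp.2 (by linarith)
    have h9 : (1:ℝ) ≤ 9 * Real.exp (-2) := by
      have hmul : Real.exp (-2:ℝ) * Real.exp (2:ℝ) = 1 := by
        rw [← Real.exp_add]; norm_num
      have hexp2 : Real.exp (2:ℝ) ≤ 9 := by
        have h2 : Real.exp (2:ℝ) = Real.exp 1 * Real.exp 1 := by
          rw [← Real.exp_add]; norm_num
        nlinarith [Real.exp_one_lt_d9, Real.exp_pos 1]
      nlinarith [Real.exp_pos (-2:ℝ), Real.exp_pos (2:ℝ)]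
    linarith
  · push_neg at hN16
    set n := N - 1 with hndef
    have hn : 16 ≤ n := by omega
    have hNn : N = n + 1 := by omega
    set ξ := Real.exp (-1/Real.sqrt n) with hξdef
    set A : Polynomial ℝ := ∏ k ∈ Finset.range n, (X + C (ξ^k)) with hA
    set B : Polynomial ℝ := ∏ k ∈ Finset.range n, (C (ξ^k) - X) with hB
    have hdA : A.natDegree ≤ n := by
      refine le_trans (Polynomial.natDegree_prod_le _ _) ?_
      refine le_trans (Finset.sum_le_card_nsmul _ _ 1 fun k _ => ?_) (by simp)
      exact le_of_eq (Polynomial.natDegree_X_add_C _)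
    have hdB : B.natDegree ≤ n := by
      refine le_trans (Polynomial.natDegree_prod_le _ _) ?_
      refine le_trans (Finset.sum_le_card_nsmul _ _ 1 fun k _ => ?_) (by simp)
      refine le_trans (Polynomial.natDegree_sub_le _ _) ?_
      simp [Polynomial.natDegree_C, Polynomial.natDegree_X]
    have hevalA : ∀ y : ℝ, A.eval y = ∏ k ∈ Finset.range n, (y + ξ^k) := by
      intro y; rw [hA, Polynomial.eval_prod]; simp
    have hevalB : ∀ y : ℝ, B.eval y = ∏ k ∈ Finset.range n, (ξ^k - y) := by
      intro y; rw [hB, Polynomial.eval_prod]; simp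
    refine ⟨X * (A - B), A + B, ?_, ?_, ?_, ?_⟩
    · refine le_trans (Polynomial.natDegree_mul_le) ?_
      have : (A - B).natDegree ≤ n := le_trans (Polynomial.natDegree_sub_le _ _) (max_le hdA hdB)
      calc X.natDegree + (A - B).natDegree ≤ 1 + n := by
            have hx1 : (X : Polynomial ℝ).natDegree ≤ 1 := le_of_eq Polynomial.natDegree_X
            omega
        _ ≤ N := by omega
    · exact le_trans (Polynomial.natDegree_add_le _ _) (le_trans (max_le hdA hdB) (by omega))
    all_goals {
      intro x hx
      have hx1 : |x| ≤ 1 := abs_le.2 ⟨hx.1, hx.2⟩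
      have key := newman_core n hn |x| (abs_nonneg x) hx1
      have e1 : A.eval x + B.eval x =
          (∏ k ∈ Finset.range n, (|x| + ξ^k)) + ∏ k ∈ Finset.range n, (ξ^k - |x|) := by
        rw [hevalA, hevalB]
        rcases abs_cases x with ⟨h1, _⟩ | ⟨h1, _⟩
        · rw [h1]
        · have p1 : ∏ k ∈ Finset.range n, (x + ξ^k) = ∏ k ∈ Finset.range n, (ξ^k - |x|) :=
            Finset.prod_congr rfl fun k _ => by rw [h1]; ring
          have p2 : ∏ k ∈ Finset.range n, (ξ^k - x) = ∏ k ∈ Finset.range n, (|x| + ξ^k) :=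
            Finset.prod_congr rfl fun k _ => by rw [h1]; ring
          rw [p1, p2]; ring
      have e2 : x * (A.eval x - B.eval x) =
          |x| * ((∏ k ∈ Finset.range n, (|x| + ξ^k)) - ∏ k ∈ Finset.range n, (ξ^k - |x|)) := by
        rw [hevalA, hevalB]
        rcases abs_cases x with ⟨h1, _⟩ | ⟨h1, _⟩
        · rw [h1]
        · have p1 : ∏ k ∈ Finset.range n, (x + ξ^k) = ∏ k ∈ Finset.range n, (ξ^k - |x|) :=
            Finset.prod_congr rfl fun k _ => by rw [h1]; ring
          have p2 : ∏ k ∈ Finset.range n, (ξ^k - x) = ∏ k ∈ Finset.range n, (|x| + ξ^k) :=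
            Finset.prod_congr rfl fun k _ => by rw [h1]; ring
          rw [p1, p2]
          nth_rewrite 1 [show x = -|x| by rw [h1]; ring]
          ring
      first
      | -- nonvanishing goal
        (show (A + B).eval x ≠ 0
         rw [Polynomial.eval_add, e1]
         exact key.1.ne')
      | -- error bound goal
        (rw [Polynomial.eval_mul, Polynomial.eval_add, Polynomial.eval_sub, Polynomial.eval_X]
         rw [e2, e1]
         refine le_trans key.2 ?_
         have hs4 : (4:ℝ) ≤ Real.sqrt n := newman_sqrt_ge n hn
         have hsqrtN : Real.sqrt N ≤ Real.sqrt n + 1 := by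
           have hcast : (N:ℝ) = (n:ℝ) + 1 := by exact_mod_cast congrArg (Nat.cast (R := ℝ)) hNn
           have hle : (N:ℝ) ≤ (Real.sqrt n + 1)^2 := by
             rw [hcast]
             nlinarith [Real.sq_sqrt (show (0:ℝ) ≤ (n:ℝ) by positivity),
               Real.sqrt_nonneg (n:ℝ)]
           calc Real.sqrt N ≤ Real.sqrt ((Real.sqrt n + 1)^2) := Real.sqrt_le_sqrt hle
             _ = Real.sqrt n + 1 := Real.sqrt_sq (by positivity)
         have hhalf : Real.exp (1/2 : ℝ) ≤ 9/4 := by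
           have hsq : Real.exp (1/2:ℝ) * Real.exp (1/2:ℝ) = Real.exp 1 := by
             rw [← Real.exp_add]; norm_num
           nlinarith [Real.exp_one_lt_d9, Real.exp_pos (1/2:ℝ)]
         have h49 : (4:ℝ) ≤ 9 * Real.exp (-(1/2):ℝ) := by
           have hmul : Real.exp (-(1/2):ℝ) * Real.exp (1/2:ℝ) = 1 := by
             rw [← Real.exp_add]; norm_num
           nlinarith [Real.exp_pos (-(1/2):ℝ), Real.exp_pos (1/2:ℝ)]
         calc 4 * Real.exp (-(Real.sqrt n / 2))
             ≤ (9 * Real.exp (-(1/2):ℝ)) * Real.exp (-(Real.sqrt n / 2)) :=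
               mul_le_mul_of_nonneg_right h49 (Real.exp_pos _).le
           _ = 9 * Real.exp (-(1/2) + -(Real.sqrt n / 2)) := by
               rw [Real.exp_add]; ring
           _ ≤ 9 * Real.exp (-(1/2) * Real.sqrt N) := by
               refine mul_le_mul_of_nonneg_left (Real.exp_le_exp.2 ?_) (by norm_num)
               nlinarith [hsqrtN])
    }
end

section
/- Let ReLU : ℝ → ℝ be defined by ReLU(x) = max(x, 0). There exist constants C > 0 and c > 0 such that for every natural number N ≥ 1 there exist real polynomials P and Q with deg P ≤ N, deg Q ≤ N, Q(x) ≠ 0 for all x ∈ [−1, 1], and sup_{x ∈ [−1,1]} | ReLU(x) − P(x)/Q(x) | ≤ C · exp(−c·√N). -/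
open Polynomial Finset Real

namespace ReluNewman

noncomputable def xi (n : ℕ) : ℝ := Real.exp (-(1 / Real.sqrt n))

lemma xi_pos (n : ℕ) : 0 < xi n := Real.exp_pos _

lemma xi_le_one (n : ℕ) : xi n ≤ 1 := by
  have h : (0:ℝ) ≤ 1 / Real.sqrt n := by positivity
  exact Real.exp_le_one_iff.2 (by linarith)

lemma xi_pow_le_one (n k : ℕ) : xi n ^ k ≤ 1 := pow_le_one₀ (xi_pos n).le (xi_le_one n)

lemma xi_pow_anti (n : ℕ) {j k : ℕ} (h : j ≤ k) : xi n ^ k ≤ xi n ^ j :=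
  pow_le_pow_of_le_one (xi_pos n).le (xi_le_one n) h

lemma exists_m (n : ℕ) (hn : 1 ≤ n) {y : ℝ} (h1 : xi n ^ n ≤ y) (h2 : y ≤ 1) :
    ∃ m, m < n ∧ xi n ^ (m + 1) ≤ y ∧ y ≤ xi n ^ m := by
  classical
  set P : ℕ → Prop := fun k => y ≤ xi n ^ k with hP
  have h0 : P 0 := by simpa [hP] using h2
  have hspec : P (Nat.findGreatest P n) := Nat.findGreatest_spec (Nat.zero_le n) h0
  have hle : Nat.findGreatest P n ≤ n := Nat.findGreatest_le n
  rcases eq_or_lt_of_le hle with heq | hlt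
  · refine ⟨n - 1, by omega, ?_, ?_⟩
    · have hh : n - 1 + 1 = n := by omega
      rw [hh]; exact h1
    · simp only [hP] at hspec
      rw [heq] at hspec
      exact hspec.trans (xi_pow_anti n (by omega))
  · refine ⟨Nat.findGreatest P n, hlt, ?_, hspec⟩
    have hng := Nat.findGreatest_is_greatest (lt_add_one (Nat.findGreatest P n)) (by omega)
    simp only [hP, not_le] at hng
    exact hng.le

lemma factor_bound (n : ℕ) {y : ℝ} {m k : ℕ} (h1 : xi n ^ (m + 1) ≤ y) (h2 : y ≤ xi n ^ m) :
    |xi n ^ k - y| ≤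
      Real.exp (-(xi n ^ (if k ≤ m then m + 1 - k else k - m))) * (y + xi n ^ k) := by
  have hx0 := xi_pos n
  set ξ := xi n
  have hy0 : 0 < y := lt_of_lt_of_le (pow_pos hx0 _) h1
  set d := if k ≤ m then m + 1 - k else k - m with hd
  have hu0 : 0 < ξ ^ d := pow_pos hx0 _
  have hu1 : ξ ^ d ≤ 1 := xi_pow_le_one n d
  have hstep : |ξ ^ k - y| ≤ (1 - ξ ^ d) / (1 + ξ ^ d) * (y + ξ ^ k) := by
    rw [div_mul_eq_mul_div, le_div_iff₀ (by linarith)]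
    by_cases hk : k ≤ m
    · have hdk : d = m + 1 - k := if_pos hk
      have hky : y ≤ ξ ^ k := h2.trans (xi_pow_anti n hk)
      have habs : |ξ ^ k - y| = ξ ^ k - y := abs_of_nonneg (by linarith)
      have hmul : ξ ^ k * ξ ^ d = ξ ^ (m + 1) := by
        rw [hdk, ← pow_add]; congr 1; omega
      rw [habs]; nlinarith [pow_pos hx0 k]
    · have hdk : d = k - m := if_neg hk
      have hky : ξ ^ k ≤ y := (xi_pow_anti n (by omega : m + 1 ≤ k)).trans h1
      have habs : |ξ ^ k - y| = y - ξ ^ k := by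
        rw [abs_of_nonpos (by linarith : ξ ^ k - y ≤ 0)]; ring
      have hmul : ξ ^ m * ξ ^ d = ξ ^ k := by
        rw [hdk, ← pow_add]; congr 1; omega
      rw [habs]; nlinarith [pow_pos hx0 k, pow_pos hx0 m]
  refine hstep.trans (mul_le_mul_of_nonneg_right ?_ (by positivity))
  have h3 : (1 - ξ ^ d) / (1 + ξ ^ d) ≤ 1 - ξ ^ d :=
    div_le_self (by linarith) (by linarith)
  have h4 : 1 - ξ ^ d ≤ Real.exp (-(ξ ^ d)) := by
    have := Real.add_one_le_exp (-(ξ ^ d)); linarith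
  linarith


lemma prod_abs_le (n : ℕ) (hn : 4 ≤ n) {y : ℝ} (h1 : xi n ^ n ≤ y) (h2 : y ≤ 1) :
    |∏ k ∈ range n, (xi n ^ k - y)| ≤
      Real.exp (-(Real.sqrt n / (2 * Real.exp 1))) * ∏ k ∈ range n, (y + xi n ^ k) := by
  obtain ⟨m, hmn, hm1, hm2⟩ := exists_m n (by omega) h1 h2
  have hx0 := xi_pos n
  set ξ := xi n with hξ
  have hy0 : 0 < y := lt_of_lt_of_le (pow_pos hx0 _) hm1
  have step1 : |∏ k ∈ range n, (ξ ^ k - y)| ≤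
      ∏ k ∈ range n,
        (Real.exp (-(ξ ^ (if k ≤ m then m + 1 - k else k - m))) * (y + ξ ^ k)) := by
    rw [Finset.abs_prod]
    exact Finset.prod_le_prod (fun k _ => abs_nonneg _) (fun k _ => factor_bound n hm1 hm2)
  rw [Finset.prod_mul_distrib, ← Real.exp_sum] at step1
  refine step1.trans
    (mul_le_mul_of_nonneg_right ?_ (Finset.prod_nonneg fun k _ => by positivity))
  apply Real.exp_le_exp.2
  have hsq : (0:ℝ) < Real.sqrt n := Real.sqrt_pos.2 (by exact_mod_cast (by omega : 0 < n))
  have key : Real.sqrt n / (2 * Real.exp 1) ≤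
      ∑ k ∈ range n, ξ ^ (if k ≤ m then m + 1 - k else k - m) := by
    set s := Nat.sqrt n with hs
    have hs2 : 2 ≤ s := by
      have h4 : 2 * 2 ≤ n := by omega
      exact Nat.le_sqrt'.2 h4
    obtain ⟨T, hTsub, hTcard, hTd⟩ :
        ∃ T : Finset ℕ, T ⊆ range n ∧ T.card = s ∧
          ∀ k ∈ T, (if k ≤ m then m + 1 - k else k - m) ≤ s := by
      rcases le_or_gt s (m + 1) with hcase | hcase
      · refine ⟨Finset.Ico (m + 1 - s) (m + 1), ?_, ?_, ?_⟩
        · intro k hk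
          simp only [Finset.mem_Ico] at hk
          exact Finset.mem_range.2 (by omega)
        · rw [Nat.card_Ico]; omega
        · intro k hk
          simp only [Finset.mem_Ico] at hk
          rw [if_pos (by omega)]; omega
      · have hsn : s * s ≤ n := by have h := Nat.sqrt_le' n; nlinarith [h]
        have h2s : 2 * s ≤ s * s := Nat.mul_le_mul_right s hs2
        refine ⟨Finset.Ico (m + 1) (m + 1 + s), ?_, ?_, ?_⟩
        · intro k hk
          simp only [Finset.mem_Ico] at hk
          exact Finset.mem_range.2 (by omega)
        · rw [Nat.card_Ico]; omega
        · intro k hk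
          simp only [Finset.mem_Ico] at hk
          rw [if_neg (by omega)]; omega
    have hns : (s:ℝ) ≤ Real.sqrt n := by
      rw [show ((s:ℝ)) = Real.sqrt ((s:ℝ)^2) from (Real.sqrt_sq (by positivity)).symm]
      apply Real.sqrt_le_sqrt
      have h : s * s ≤ n := by have h := Nat.sqrt_le' n; nlinarith [h]
      have h2 : ((s:ℝ)) * ((s:ℝ)) ≤ (n:ℝ) := by exact_mod_cast h
      push_cast
      nlinarith [h2]
    have hsterm : ∀ k ∈ T, Real.exp (-1) ≤ ξ ^ (if k ≤ m then m + 1 - k else k - m) := by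
      intro k hk
      refine le_trans ?_ (xi_pow_anti n (hTd k hk))
      have hxis : ξ ^ s = Real.exp (-((s:ℝ) / Real.sqrt n)) := by
        rw [hξ, xi, ← Real.exp_nat_mul]
        congr 1; field_simp
      rw [hxis]
      apply Real.exp_le_exp.2
      have : (s:ℝ) / Real.sqrt n ≤ 1 := (div_le_one hsq).2 hns
      linarith
    have hsum1 : (s:ℝ) * Real.exp (-1) ≤
        ∑ k ∈ T, ξ ^ (if k ≤ m then m + 1 - k else k - m) := by
      calc (s:ℝ) * Real.exp (-1) = ∑ _k ∈ T, Real.exp (-1) := by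
            rw [Finset.sum_const, hTcard, nsmul_eq_mul]
        _ ≤ _ := Finset.sum_le_sum hsterm
    have hsum2 : ∑ k ∈ T, ξ ^ (if k ≤ m then m + 1 - k else k - m) ≤
        ∑ k ∈ range n, ξ ^ (if k ≤ m then m + 1 - k else k - m) :=
      Finset.sum_le_sum_of_subset_of_nonneg hTsub (fun k _ _ => by positivity)
    have hn2s : Real.sqrt n ≤ 2 * s := by
      have h1 : Real.sqrt n ≤ (s:ℝ) + 1 := by
        rw [show ((s:ℝ) + 1) = Real.sqrt (((s:ℝ) + 1)^2) from (Real.sqrt_sq (by positivity)).symm]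
        apply Real.sqrt_le_sqrt
        have h : n ≤ (s + 1) * (s + 1) := (Nat.lt_succ_sqrt n).le
        have h2 : (n:ℝ) ≤ ((s:ℝ) + 1) * ((s:ℝ) + 1) := by exact_mod_cast h
        push_cast
        nlinarith [h2]
      have h2 : (1:ℝ) ≤ (s:ℝ) := by exact_mod_cast le_trans (by norm_num) hs2
      linarith
    have hfin : Real.sqrt n / (2 * Real.exp 1) ≤ (s:ℝ) * Real.exp (-1) := by
      rw [Real.exp_neg, div_le_iff₀ (by positivity)]
      have heq : (s:ℝ) * (Real.exp 1)⁻¹ * (2 * Real.exp 1) = 2 * s := by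
        field_simp
      rw [heq]; exact hn2s
    linarith
  have := neg_le_neg key
  calc ∑ k ∈ range n, -(ξ ^ (if k ≤ m then m + 1 - k else k - m))
      = -∑ k ∈ range n, ξ ^ (if k ≤ m then m + 1 - k else k - m) := by
        rw [Finset.sum_neg_distrib]
    _ ≤ -(Real.sqrt n / (2 * Real.exp 1)) := this

lemma A_le_half (n : ℕ) (hn : 15 ≤ n) :
    Real.exp (-(Real.sqrt n / (2 * Real.exp 1))) ≤ 1 / 2 := by
  have hlog : Real.log 2 < 0.6931471808 := Real.log_two_lt_d9
  have hexp : Real.exp 1 < 2.7182818286 := Real.exp_one_lt_d9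
  have hlog0 : 0 < Real.log 2 := Real.log_pos (by norm_num)
  have hexp0 : 0 < Real.exp 1 := Real.exp_pos 1
  have hsqrt : (3.87 : ℝ) ≤ Real.sqrt n := by
    rw [show (3.87:ℝ) = Real.sqrt (3.87^2) from (Real.sqrt_sq (by norm_num)).symm]
    apply Real.sqrt_le_sqrt
    have : (15:ℝ) ≤ n := by exact_mod_cast hn
    nlinarith
  have h12 : (1:ℝ)/2 = Real.exp (Real.log (1/2)) := (Real.exp_log (by norm_num)).symm
  rw [h12]
  apply Real.exp_le_exp.2
  rw [show (1:ℝ)/2 = 2⁻¹ by norm_num, Real.log_inv]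
  rw [neg_le_neg_iff, le_div_iff₀ (by positivity)]
  nlinarith

lemma key (n : ℕ) (hn : 15 ≤ n) {y : ℝ} (hy0 : 0 ≤ y) (hy1 : y ≤ 1) :
    0 < (∏ k ∈ range n, (y + xi n ^ k)) + (∏ k ∈ range n, (xi n ^ k - y)) ∧
    |y * (∏ k ∈ range n, (xi n ^ k - y)) /
      ((∏ k ∈ range n, (y + xi n ^ k)) + (∏ k ∈ range n, (xi n ^ k - y)))|
      ≤ 2 * Real.exp (-(Real.sqrt n / (2 * Real.exp 1))) := by
  have hx0 := xi_pos n
  have hx1 := xi_le_one n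
  set ξ := xi n with hξ
  set a := ∏ k ∈ range n, (y + ξ ^ k) with ha
  set b := ∏ k ∈ range n, (ξ ^ k - y) with hb
  set A := Real.exp (-(Real.sqrt n / (2 * Real.exp 1))) with hA
  have hApos : 0 < A := Real.exp_pos _
  have hAhalf : A ≤ 1 / 2 := A_le_half n hn
  have hapos : 0 < a := Finset.prod_pos fun k _ => by positivity
  have hsq : (0:ℝ) < Real.sqrt n := Real.sqrt_pos.2 (by exact_mod_cast (by omega : 0 < n))
  rcases le_or_gt y (ξ ^ n) with hyc | hyc
  · -- small y : b ≥ 0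
    have hbnn : 0 ≤ b := Finset.prod_nonneg fun k hk => by
      have hk' : k ≤ n - 1 := by
        have := Finset.mem_range.1 hk; omega
      have : ξ ^ (n-1) ≤ ξ ^ k := xi_pow_anti n hk'
      have h2 : ξ ^ n ≤ ξ ^ (n-1) := xi_pow_anti n (by omega)
      linarith
    have hab : 0 < a + b := by linarith
    refine ⟨hab, ?_⟩
    have hnum : 0 ≤ y * b / (a + b) := by positivity
    rw [abs_of_nonneg hnum]
    have hfrac : b / (a + b) ≤ 1 := by
      rw [div_le_one hab]; linarith
    have h1 : y * b / (a + b) ≤ y := by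
      rw [mul_div_assoc]
      calc y * (b / (a + b)) ≤ y * 1 := by
            apply mul_le_mul_of_nonneg_left hfrac hy0
        _ = y := mul_one y
    have hxin : ξ ^ n = Real.exp (-Real.sqrt n) := by
      rw [hξ, xi, ← Real.exp_nat_mul]
      congr 1
      rw [mul_neg, show (n:ℝ) * (1 / Real.sqrt n) = (n:ℝ) / Real.sqrt n by ring,
        Real.div_sqrt]
    have h2 : ξ ^ n ≤ A := by
      rw [hxin, hA]
      apply Real.exp_le_exp.2
      rw [neg_le_neg_iff]
      rw [div_le_iff₀ (by positivity)]
      nlinarith [Real.exp_one_gt_d9, hsq]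
    linarith
  · -- large y : use prod_abs_le
    have habs : |b| ≤ A * a := prod_abs_le n (by omega) hyc.le hy1
    have hab2 : a / 2 ≤ a + b := by
      have h1 : -|b| ≤ b := neg_abs_le b
      nlinarith
    have hab : 0 < a + b := lt_of_lt_of_le (by positivity) hab2
    refine ⟨hab, ?_⟩
    rw [abs_div, abs_mul, abs_of_pos hab]
    have hy : |y| ≤ 1 := by rw [abs_of_nonneg hy0]; exact hy1
    calc |y| * |b| / (a + b) ≤ (A * a) / (a / 2) := by
          apply div_le_div₀ (by positivity) ?_ (by positivity) hab2
          calc |y| * |b| ≤ 1 * (A * a) := by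
                apply mul_le_mul hy habs (abs_nonneg b) (by norm_num)
            _ = A * a := one_mul _
      _ = 2 * A := by field_simp
theorem rational_approximation_relu_root_exponential' :
    ∃ C > (0 : ℝ), ∃ c > (0 : ℝ), ∀ N : ℕ, 1 ≤ N →
      ∃ P Q : Polynomial ℝ,
        P.natDegree ≤ N ∧ Q.natDegree ≤ N ∧
        (∀ x ∈ Set.Icc (-1 : ℝ) 1, Q.eval x ≠ 0) ∧
        ∀ x ∈ Set.Icc (-1 : ℝ) 1,
          |max x 0 - P.eval x / Q.eval x| ≤ C * Real.exp (-c * Real.sqrt N) := by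
  refine ⟨2, by norm_num, 1 / (4 * Real.exp 1), by positivity, ?_⟩
  intro N hN
  by_cases hbig : 16 ≤ N
  · set n := N - 1 with hnN
    have hn : 15 ≤ n := by omega
    have hx0 := xi_pos n
    set ξ := xi n with hξ
    set p : Polynomial ℝ := ∏ k ∈ Finset.range n, (Polynomial.X + Polynomial.C (ξ ^ k)) with hp
    have hpdeg : p.natDegree = n := by
      rw [hp, Polynomial.natDegree_prod_of_monic _ _ fun k _ => Polynomial.monic_X_add_C _]
      rw [Finset.sum_congr rfl fun k _ => Polynomial.natDegree_X_add_C (ξ ^ k)]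
      rw [Finset.sum_const, Finset.card_range, smul_eq_mul, mul_one]
    have hpe : ∀ x : ℝ, p.eval x = ∏ k ∈ Finset.range n, (x + ξ ^ k) := by
      intro x; simp [hp, Polynomial.eval_prod]
    have hQeval : ∀ x : ℝ, (p + p.comp (-Polynomial.X)).eval x = p.eval x + p.eval (-x) := by
      intro x; simp [Polynomial.eval_comp]
    have hPe : ∀ x : ℝ, (Polynomial.X * p).eval x = x * p.eval x := by intro x; simp
    have hmain : ∀ x ∈ Set.Icc (-1:ℝ) 1,
        0 < p.eval x + p.eval (-x) ∧
        |max x 0 - x * p.eval x / (p.eval x + p.eval (-x))| ≤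
          2 * Real.exp (-(Real.sqrt n / (2 * Real.exp 1))) := by
      intro x hx
      obtain ⟨hx1, hx2⟩ := hx
      rcases le_or_gt 0 x with hx0' | hx0'
      · have hkk := key n hn hx0' hx2
        have hea : p.eval x = ∏ k ∈ Finset.range n, (x + ξ ^ k) := hpe x
        have heb : p.eval (-x) = ∏ k ∈ Finset.range n, (ξ ^ k - x) := by
          rw [hpe]; exact Finset.prod_congr rfl fun k _ => by ring
        rw [hea, heb]
        refine ⟨hkk.1, ?_⟩
        rw [max_eq_left hx0']
        have hne : (∏ k ∈ Finset.range n, (x + ξ ^ k)) +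
            (∏ k ∈ Finset.range n, (ξ ^ k - x)) ≠ 0 := ne_of_gt hkk.1
        have heq2 : x - x * (∏ k ∈ Finset.range n, (x + ξ ^ k)) /
              ((∏ k ∈ Finset.range n, (x + ξ ^ k)) + (∏ k ∈ Finset.range n, (ξ ^ k - x)))
            = x * (∏ k ∈ Finset.range n, (ξ ^ k - x)) /
              ((∏ k ∈ Finset.range n, (x + ξ ^ k)) + (∏ k ∈ Finset.range n, (ξ ^ k - x))) := by
          field_simp
          ring
        rw [heq2]
        exact hkk.2
      · have hy0 : (0:ℝ) ≤ -x := by linarith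
        have hy1 : -x ≤ 1 := by linarith
        have hkk := key n hn hy0 hy1
        have hea : p.eval (-x) = ∏ k ∈ Finset.range n, (-x + ξ ^ k) := hpe (-x)
        have heb : p.eval x = ∏ k ∈ Finset.range n, (ξ ^ k - -x) := by
          rw [hpe]; exact Finset.prod_congr rfl fun k _ => by ring
        rw [hea, heb]
        refine ⟨by linarith [hkk.1], ?_⟩
        rw [max_eq_right hx0'.le]
        have heq2 : (0:ℝ) - x * (∏ k ∈ Finset.range n, (ξ ^ k - -x)) /
              ((∏ k ∈ Finset.range n, (ξ ^ k - -x)) + (∏ k ∈ Finset.range n, (-x + ξ ^ k)))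
            = (-x) * (∏ k ∈ Finset.range n, (ξ ^ k - -x)) /
              ((∏ k ∈ Finset.range n, (-x + ξ ^ k)) + (∏ k ∈ Finset.range n, (ξ ^ k - -x))) := by
          rw [add_comm (∏ k ∈ Finset.range n, (ξ ^ k - -x))]
          ring
        rw [heq2]
        exact hkk.2
    refine ⟨Polynomial.X * p, p + p.comp (-Polynomial.X), ?_, ?_, ?_, ?_⟩
    · calc (Polynomial.X * p).natDegree ≤ Polynomial.X.natDegree + p.natDegree :=
          Polynomial.natDegree_mul_le
        _ = 1 + n := by rw [Polynomial.natDegree_X, hpdeg]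
        _ ≤ N := by omega
    · refine le_trans (Polynomial.natDegree_add_le _ _) (max_le ?_ ?_)
      · rw [hpdeg]; omega
      · refine le_trans Polynomial.natDegree_comp_le ?_
        rw [hpdeg]
        have hdn : (-Polynomial.X : Polynomial ℝ).natDegree = 1 := by
          rw [Polynomial.natDegree_neg, Polynomial.natDegree_X]
        rw [hdn, mul_one]; omega
    · intro x hx
      rw [hQeval x]
      exact ne_of_gt (hmain x hx).1
    · intro x hx
      rw [hQeval x, hPe x]
      refine le_trans (hmain x hx).2 ?_
      have hsqn : (0:ℝ) < Real.sqrt n := Real.sqrt_pos.2 (by exact_mod_cast (by omega : 0 < n))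
      have hcast : (n:ℝ) = (N:ℝ) - 1 := by
        have h := hnN
        have h2 : n + 1 = N := by omega
        have := congrArg (Nat.cast : ℕ → ℝ) h2
        push_cast at this
        linarith
      have hNn : Real.sqrt N ≤ 2 * Real.sqrt n := by
        rw [show (2:ℝ) * Real.sqrt n = Real.sqrt (2^2 * n) by
          rw [Real.sqrt_mul (by positivity), Real.sqrt_sq (by norm_num)]]
        apply Real.sqrt_le_sqrt
        have hN16 : (16:ℝ) ≤ (N:ℝ) := by exact_mod_cast hbig
        nlinarith [hcast]
      have he := Real.exp_pos 1
      apply mul_le_mul_of_nonneg_left _ (by norm_num : (0:ℝ) ≤ 2)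
      apply Real.exp_le_exp.2
      rw [neg_mul, neg_le_neg_iff]
      rw [show (1 / (4 * Real.exp 1)) * Real.sqrt N = Real.sqrt N / (4 * Real.exp 1) by ring]
      rw [div_le_div_iff₀ (by positivity) (by positivity)]
      nlinarith [hNn, Real.sqrt_nonneg (n:ℝ)]
  · refine ⟨Polynomial.X, Polynomial.C 2, by simpa using hN, by simp, fun x _ => by norm_num, ?_⟩
    intro x hx
    obtain ⟨hx1, hx2⟩ := hx
    simp only [Polynomial.eval_X, Polynomial.eval_C]
    have h1 : |max x 0 - x / 2| ≤ 1 / 2 := by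
      rcases le_or_gt x 0 with h | h
      · rw [max_eq_right h, abs_of_nonneg (by linarith)]; linarith
      · rw [max_eq_left h.le, show x - x/2 = x/2 by ring, abs_of_nonneg (by linarith)]; linarith
    refine h1.trans ?_
    have hsN : Real.sqrt N ≤ 4 := by
      rw [show (4:ℝ) = Real.sqrt 16 by
        rw [show (16:ℝ) = 4^2 by norm_num, Real.sqrt_sq (by norm_num)]]
      apply Real.sqrt_le_sqrt
      exact_mod_cast (by omega : N ≤ 16)
    have he1 : (1:ℝ) ≤ Real.exp 1 := Real.one_le_exp (by norm_num)
    have ht : (1 / (4 * Real.exp 1)) * Real.sqrt N ≤ 1 := by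
      rw [div_mul_eq_mul_div, div_le_one (by positivity)]
      nlinarith [Real.sqrt_nonneg (N:ℝ)]
    have h2 : Real.exp (-1) ≤ Real.exp (-(1 / (4 * Real.exp 1)) * Real.sqrt N) := by
      apply Real.exp_le_exp.2
      rw [neg_mul, neg_le_neg_iff]
      exact ht
    have h3 : (1:ℝ)/4 ≤ Real.exp (-1) := by
      rw [Real.exp_neg]
      have h4 : Real.exp 1 ≤ 4 := le_of_lt (lt_trans Real.exp_one_lt_d9 (by norm_num))
      have := inv_anti₀ (Real.exp_pos 1) h4
      rw [show (1:ℝ)/4 = 4⁻¹ by norm_num]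
      exact this
    linarith

end ReluNewman

/-- **Near-root-exponential rational approximation of `ReLU` on `[-1, 1]`.**
With `ReLU x = max x 0`, there are constants `C, c > 0` such that for each `N ≥ 1` there is a
rational function `P/Q` with `deg P ≤ N`, `deg Q ≤ N`, `Q` nonvanishing on `[-1, 1]`, and
`sup_{x ∈ [-1,1]} |ReLU x - P x / Q x| ≤ C · exp(-c√N)`. -/
theorem rational_approximation_relu_root_exponential :
    ∃ C > (0 : ℝ), ∃ c > (0 : ℝ), ∀ N : ℕ, 1 ≤ N →
      ∃ P Q : Polynomial ℝ,
        P.natDegree ≤ N ∧ Q.natDegree ≤ N ∧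
        (∀ x ∈ Set.Icc (-1 : ℝ) 1, Q.eval x ≠ 0) ∧
        ∀ x ∈ Set.Icc (-1 : ℝ) 1,
          |max x 0 - P.eval x / Q.eval x| ≤ C * Real.exp (-c * Real.sqrt N) := by
  exact ReluNewman.rational_approximation_relu_root_exponential'
end
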